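/- arXiv:1410.1856 — 4 statements merged into one kernel-verified Lean document; each statement's English description precedes it below -/
import Mathlib

section
/- Suppose f₀, f₁ are smooth real functions with fₙ₊₁ = fₙ₋₁²(fₙ − 2) + 2 for n ≥ 1. If f₀(x₀) = 0, f₁(x₀) < 2, f₀'(x₀) ≠ 0 and f₁(x₀) ≠ 0, then for every k ≥ 3, fₖ(x₀) = 2, fₖ'(x₀) = 0, and fₖ''(x₀) = −2·(2^{k−3}ρ)² where ρ = √(2 − f₁(x₀))·|f₀'(x₀)·f₁(x₀)| > 0. -/
theorem stmt_2 (f : ℕ → ℝ → ℝ) (x₀ : ℝ)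
    (hs0 : ContDiff ℝ (⊤ : ℕ∞) (f 0)) (hs1 : ContDiff ℝ (⊤ : ℕ∞) (f 1))
    (hrec : ∀ n, 1 ≤ n → ∀ x, f (n+1) x = (f (n-1) x)^2 * (f n x - 2) + 2)
    (h0 : f 0 x₀ = 0) (h1lt : f 1 x₀ < 2)
    (hd0 : deriv (f 0) x₀ ≠ 0) (h1ne : f 1 x₀ ≠ 0) :
    Real.sqrt (2 - f 1 x₀) * |deriv (f 0) x₀ * f 1 x₀| > 0 ∧
    ∀ k, 3 ≤ k →
      f k x₀ = 2 ∧ deriv (f k) x₀ = 0 ∧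
      deriv (deriv (f k)) x₀ =
        -2 * ((2:ℝ)^(k-3) * (Real.sqrt (2 - f 1 x₀) * |deriv (f 0) x₀ * f 1 x₀|))^2 := by
  -- all fₙ are smooth
  have hsm : ∀ n, ContDiff ℝ (⊤ : ℕ∞) (f n) := by
    have key : ∀ n, ContDiff ℝ (⊤ : ℕ∞) (f n) ∧ ContDiff ℝ (⊤ : ℕ∞) (f (n+1)) := by
      intro n
      induction n with
      | zero => exact ⟨hs0, hs1⟩
      | succ m ih =>
        refine ⟨ih.2, ?_⟩
        have heq : f (m+2) = fun x => (f m x)^2 * (f (m+1) x - 2) + 2 := by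
          funext x; simpa using hrec (m+1) (by omega) x
        rw [heq]
        exact ((ih.1.pow 2).mul (ih.2.sub contDiff_const)).add contDiff_const
    exact fun n => (key n).1
  have hdiff : ∀ n, Differentiable ℝ (f n) :=
    fun n => (hsm n).differentiable (by simp)
  have hdiff' : ∀ n, Differentiable ℝ (deriv (f n)) := by
    intro n
    exact ((contDiff_infty_iff_deriv.mp ((hsm n).of_le (by simp))).2).differentiable (by simp)
  -- first derivative formula
  have hder : ∀ n, 1 ≤ n → ∀ x, deriv (f (n+1)) x =
      2 * f (n-1) x * deriv (f (n-1)) x * (f n x - 2)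
      + (f (n-1) x)^2 * deriv (f n) x := by
    intro n hn x
    have heq : f (n+1) = fun x => (f (n-1) x)^2 * (f n x - 2) + 2 :=
      funext (fun x => hrec n hn x)
    have hu : HasDerivAt (f (n-1)) (deriv (f (n-1)) x) x := (hdiff (n-1) x).hasDerivAt
    have hv : HasDerivAt (f n) (deriv (f n) x) x := (hdiff n x).hasDerivAt
    have H := ((hu.pow 2).mul (hv.sub_const 2)).add_const 2
    rw [heq, (show HasDerivAt (fun x => (f (n-1) x)^2 * (f n x - 2) + 2) _ x from H).deriv]; simp only [Pi.pow_apply]; ring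
  -- second derivative formula at any point
  have hder2 : ∀ n, 1 ≤ n → ∀ x, deriv (deriv (f (n+1))) x =
      (2 * (deriv (f (n-1)) x)^2 + 2 * f (n-1) x * deriv (deriv (f (n-1))) x) * (f n x - 2)
      + 4 * f (n-1) x * deriv (f (n-1)) x * deriv (f n) x
      + (f (n-1) x)^2 * deriv (deriv (f n)) x := by
    intro n hn x
    have heq : deriv (f (n+1)) = fun x =>
        2 * f (n-1) x * deriv (f (n-1)) x * (f n x - 2) + (f (n-1) x)^2 * deriv (f n) x :=
      funext (fun x => hder n hn x)
    have hu : HasDerivAt (f (n-1)) (deriv (f (n-1)) x) x := (hdiff (n-1) x).hasDerivAt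
    have hv : HasDerivAt (f n) (deriv (f n) x) x := (hdiff n x).hasDerivAt
    have hu' : HasDerivAt (deriv (f (n-1))) (deriv (deriv (f (n-1))) x) x :=
      (hdiff' (n-1) x).hasDerivAt
    have hv' : HasDerivAt (deriv (f n)) (deriv (deriv (f n)) x) x := (hdiff' n x).hasDerivAt
    have H1 : HasDerivAt (fun x => 2 * f (n-1) x * deriv (f (n-1)) x * (f n x - 2))
        (((2 * deriv (f (n-1)) x) * deriv (f (n-1)) x + (2 * f (n-1) x) * deriv (deriv (f (n-1))) x) * (f n x - 2)
          + (2 * f (n-1) x * deriv (f (n-1)) x) * deriv (f n) x) x :=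
      ((hu.const_mul 2).mul hu').mul (hv.sub_const 2)
    have H2 : HasDerivAt (fun x => (f (n-1) x)^2 * deriv (f n) x)
        ((2 * f (n-1) x ^ 1 * deriv (f (n-1)) x) * deriv (f n) x
          + (f (n-1) x)^2 * deriv (deriv (f n)) x) x :=
      (hu.pow 2).mul hv'
    have H := H1.add H2
    rw [heq, (show HasDerivAt (fun x => 2 * f (n-1) x * deriv (f (n-1)) x * (f n x - 2)
      + (f (n-1) x)^2 * deriv (f n) x) _ x from H).deriv]; ring
  set c := f 1 x₀ with hc
  set a := deriv (f 0) x₀ with ha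
  -- values at x₀ for k ≥ 2
  have hS : ∀ k, 2 ≤ k → f k x₀ = 2 ∧ deriv (f k) x₀ = 0 := by
    intro k hk
    induction k, hk using Nat.le_induction with
    | base =>
      constructor
      · simpa [h0] using hrec 1 le_rfl x₀
      · simpa [h0] using hder 1 le_rfl x₀
    | succ k hk ih =>
      have hk1 : 1 ≤ k := by omega
      constructor
      · rw [hrec k hk1 x₀, ih.1]; ring
      · rw [hder k hk1 x₀, ih.1, ih.2]; ring
  -- second derivative of f 2 at x₀
  have hf2'' : deriv (deriv (f 2)) x₀ = 2 * a^2 * (c - 2) := by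
    have := hder2 1 le_rfl x₀
    simp only [Nat.sub_self] at this
    rw [this, h0, ← ha, ← hc]; ring
  -- second derivatives for k ≥ 3
  have hT : ∀ k, 3 ≤ k → deriv (deriv (f k)) x₀ = 2 * a^2 * (c-2) * c^2 * 4^(k-3) := by
    intro k hk
    induction k, hk using Nat.le_induction with
    | base =>
      have h2 := hS 2 le_rfl
      have := hder2 2 (by omega) x₀
      norm_num at this ⊢
      rw [this, h2.1, h2.2, hf2'', ← hc]; ring
    | succ k hk ih =>
      have h2 := hS (k-1) (by omega)
      have h3 := hS k (by omega)
      have heq := hder2 k (by omega) x₀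
      rw [heq, h2.1, h2.2, h3.1, h3.2, ih]
      have : k + 1 - 3 = (k - 3) + 1 := by omega
      rw [this, pow_succ]; ring
  have hρ2 : ∀ k : ℕ, -2 * ((2:ℝ)^k * (Real.sqrt (2 - c) * |a * c|))^2
      = 2 * a^2 * (c-2) * c^2 * 4^k := by
    intro k
    have h4 : ((2:ℝ)^k)^2 = 4^k := by
      rw [← pow_mul, mul_comm, pow_mul]; norm_num
    rw [mul_pow, mul_pow, h4, sq_abs, Real.sq_sqrt (by linarith)]
    ring
  refine ⟨mul_pos (Real.sqrt_pos.mpr (by linarith)) (abs_pos.mpr (mul_ne_zero hd0 h1ne)), ?_⟩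
  intro k hk
  exact ⟨(hS k (by omega)).1, (hS k (by omega)).2, by rw [hT k hk, ← hρ2 (k-3)]⟩
end

section
/- Let t ≥ 2√2 and τ = t(t² − 6)√(t² − 4). Define g₁(x) = tx + x² and g₂(x) = (6 − t²) + t²x² + 2tx³ + x⁴, and gₙ₊₁ = gₙ₋₁²(gₙ − 2) + 2 for n ≥ 2. Then for every n ≥ 4, gₙ(0) = 2, gₙ'(0) = 0, and gₙ''(0) = −2·4^{n−4}·t²(t²−6)²(t²−4), i.e., gₙ(x) = 2 − 4^{n−4}τ²x² + O(x³). -/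
open Polynomial

noncomputable def Pg (t : ℝ) : ℕ → Polynomial ℝ
  | 0 => 0
  | 1 => C t * X + X ^ 2
  | 2 => C (6 - t^2) + C (t^2) * X ^ 2 + C (2*t) * X ^ 3 + X ^ 4
  | (n+3) => (Pg t (n+1)) ^ 2 * (Pg t (n+2) - 2) + 2

lemma step_eval (t : ℝ) (n : ℕ) :
    (Pg t (n+3)).eval 0 = (Pg t (n+1)).eval 0 ^ 2 * ((Pg t (n+2)).eval 0 - 2) + 2 := by
  simp [Pg]

lemma step_d1 (t : ℝ) (n : ℕ) :
    (derivative (Pg t (n+3))).eval 0 =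
      2 * (Pg t (n+1)).eval 0 * (derivative (Pg t (n+1))).eval 0 * ((Pg t (n+2)).eval 0 - 2)
      + (Pg t (n+1)).eval 0 ^ 2 * (derivative (Pg t (n+2))).eval 0 := by
  simp [Pg, derivative_pow]

lemma step_d2 (t : ℝ) (n : ℕ) :
    (derivative (derivative (Pg t (n+3)))).eval 0 =
      2 * ((derivative (Pg t (n+1))).eval 0 ^ 2
           + (Pg t (n+1)).eval 0 * (derivative (derivative (Pg t (n+1)))).eval 0)
        * ((Pg t (n+2)).eval 0 - 2)
      + 4 * (Pg t (n+1)).eval 0 * (derivative (Pg t (n+1))).eval 0 * (derivative (Pg t (n+2))).eval 0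
      + (Pg t (n+1)).eval 0 ^ 2 * (derivative (derivative (Pg t (n+2)))).eval 0 := by
  simp [Pg, derivative_pow, derivative_mul]
  ring

lemma base1 (t : ℝ) : (Pg t 1).eval 0 = 0 ∧ (derivative (Pg t 1)).eval 0 = t ∧
    (derivative (derivative (Pg t 1))).eval 0 = 2 := by
  refine ⟨?_, ?_, ?_⟩ <;> simp [Pg, derivative_pow]

lemma base2 (t : ℝ) : (Pg t 2).eval 0 = 6 - t^2 ∧ (derivative (Pg t 2)).eval 0 = 0 ∧
    (derivative (derivative (Pg t 2))).eval 0 = 2 * t^2 := by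
  refine ⟨by simp [Pg, derivative_pow], by simp [Pg, derivative_pow], ?_⟩
  simp [Pg, derivative_pow]; ring

lemma base3 (t : ℝ) : (Pg t 3).eval 0 = 2 ∧ (derivative (Pg t 3)).eval 0 = 0 ∧
    (derivative (derivative (Pg t 3))).eval 0 = 2 * t^2 * (4 - t^2) := by
  obtain ⟨a1, b1, c1⟩ := base1 t
  obtain ⟨a2, b2, c2⟩ := base2 t
  refine ⟨?_, ?_, ?_⟩
  · have h := step_eval t 0; norm_num at h; rw [h, a1, a2]; ring
  · have h := step_d1 t 0; norm_num at h; rw [h, a1, a2, b1, b2]; ring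
  · have h := step_d2 t 0; norm_num at h; rw [h, a1, a2, b1, b2, c1, c2]; ring

lemma base4 (t : ℝ) : (Pg t 4).eval 0 = 2 ∧ (derivative (Pg t 4)).eval 0 = 0 ∧
    (derivative (derivative (Pg t 4))).eval 0 = -2 * (t^2 * (t^2-6)^2 * (t^2-4)) := by
  obtain ⟨a2, b2, c2⟩ := base2 t
  obtain ⟨a3, b3, c3⟩ := base3 t
  refine ⟨?_, ?_, ?_⟩
  · have h := step_eval t 1; norm_num at h; rw [h, a2, a3]; ring
  · have h := step_d1 t 1; norm_num at h; rw [h, a2, a3, b2, b3]; ring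
  · have h := step_d2 t 1; norm_num at h; rw [h, a2, a3, b2, b3, c2, c3]; ring

lemma keyPg (t : ℝ) : ∀ m : ℕ,
    ((Pg t (m+3)).eval 0 = 2 ∧ (derivative (Pg t (m+3))).eval 0 = 0) ∧
    ((Pg t (m+4)).eval 0 = 2 ∧ (derivative (Pg t (m+4))).eval 0 = 0) := by
  intro m
  induction m with
  | zero => exact ⟨⟨(base3 t).1, (base3 t).2.1⟩, ⟨(base4 t).1, (base4 t).2.1⟩⟩
  | succ k ih =>
    obtain ⟨⟨a1, b1⟩, ⟨a2, b2⟩⟩ := ih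
    refine ⟨⟨a2, b2⟩, ?_, ?_⟩
    · rw [show k+1+4 = (k+2)+3 from rfl, step_eval]
      rw [show k+2+1 = k+3 from rfl, show k+2+2 = k+4 from rfl, a1, a2]; ring
    · rw [show k+1+4 = (k+2)+3 from rfl, step_d1]
      rw [show k+2+1 = k+3 from rfl, show k+2+2 = k+4 from rfl, a1, a2, b1, b2]; ring

lemma keyPg2 (t : ℝ) : ∀ m : ℕ,
    (derivative (derivative (Pg t (m+4)))).eval 0
      = -2 * (4:ℝ)^m * (t^2 * (t^2-6)^2 * (t^2-4)) := by
  intro m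
  induction m with
  | zero => simpa using (base4 t).2.2
  | succ k ih =>
    obtain ⟨⟨a1, b1⟩, ⟨a2, b2⟩⟩ := keyPg t k
    rw [show k+1+4 = (k+2)+3 from rfl, step_d2]
    rw [show k+2+1 = k+3 from rfl, show k+2+2 = k+4 from rfl, a1, a2, b1, b2, ih]; ring

lemma gmatch (t : ℝ) (g : ℕ → ℝ → ℝ)
    (hg1 : ∀ x, g 1 x = t*x + x^2)
    (hg2 : ∀ x, g 2 x = (6 - t^2) + t^2*x^2 + 2*t*x^3 + x^4)
    (hrec : ∀ n, 2 ≤ n → ∀ x, g (n+1) x = (g (n-1) x)^2 * (g n x - 2) + 2) :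
    ∀ m : ℕ, (∀ x, g (m+1) x = (Pg t (m+1)).eval x) ∧ (∀ x, g (m+2) x = (Pg t (m+2)).eval x) := by
  intro m
  induction m with
  | zero =>
    constructor
    · intro x; rw [hg1]; simp [Pg]
    · intro x; rw [hg2]; simp [Pg]
  | succ k ih =>
    obtain ⟨h1, h2⟩ := ih
    refine ⟨h2, fun x => ?_⟩
    have := hrec (k+2) (by omega) x
    simp only [show k+2+1 = k+3 from rfl, show k+2-1 = k+1 from rfl] at this
    rw [show k+1+2 = k+3 from rfl, this, h1, h2]
    simp [Pg]

theorem stmt_4 (t : ℝ) (ht : 2 * Real.sqrt 2 ≤ t)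
    (g : ℕ → ℝ → ℝ)
    (hg1 : ∀ x, g 1 x = t*x + x^2)
    (hg2 : ∀ x, g 2 x = (6 - t^2) + t^2*x^2 + 2*t*x^3 + x^4)
    (hrec : ∀ n, 2 ≤ n → ∀ x, g (n+1) x = (g (n-1) x)^2 * (g n x - 2) + 2) :
    ∀ n, 4 ≤ n →
      g n 0 = 2 ∧ deriv (g n) 0 = 0 ∧
      deriv (deriv (g n)) 0 = -2 * (4:ℝ)^(n-4) * (t^2 * (t^2-6)^2 * (t^2-4)) := by
  intro n hn
  obtain ⟨m, rfl⟩ : ∃ m, n = m + 4 := ⟨n - 4, by omega⟩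
  have hfun : g (m+4) = fun x => (Pg t (m+4)).eval x := by
    funext x
    have := (gmatch t g hg1 hg2 hrec (m+3)).1 x
    simpa [show m+3+1 = m+4 from rfl] using this
  have hd1 : deriv (g (m+4)) = fun x => (derivative (Pg t (m+4))).eval x := by
    funext x; rw [hfun]; exact Polynomial.deriv (p := Pg t (m+4))
  refine ⟨?_, ?_, ?_⟩
  · rw [hfun]; exact (keyPg t m).2.1
  · rw [hd1]; exact (keyPg t m).2.2
  · rw [hd1, Polynomial.deriv (p := derivative (Pg t (m+4))), show m+4-4 = m from by omega]
    exact keyPg2 t m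
end

section
/- Formal power series identity: (Σ_{n≥2} xⁿ/(n!·2ⁿ)) · (Σ_{n≥3} xⁿ/(2β)ⁿ) ⪯ (e^β − 1 − β) · Σ_{n≥5} xⁿ/(2β)ⁿ, coefficientwise, for any β ≥ 1. -/
/-!
The coefficient of `xⁿ` in the product is the convolution
`∑_{k=2}^{n-3} 1/(k! 2ᵏ) · 1/(2β)^{n-k} = (2β)⁻ⁿ ∑_{k=2}^{n-3} βᵏ/k!`,
and the partial sum `∑_{k≥2} βᵏ/k!` of the exponential series is at most `e^β - 1 - β`.
-/

open Finset Nat PowerSeries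

noncomputable section

/-- The series `e^{x/2} - 1 - x/2`. -/
def halfExpTail : PowerSeries ℝ :=
  mk fun n => if 2 ≤ n then 1 / ((n.factorial : ℝ) * 2 ^ n) else 0

def geomTail (β : ℝ) : PowerSeries ℝ :=
  mk fun n => if 3 ≤ n then 1 / (2 * β) ^ n else 0

end

theorem Real.sum_Ico_two_pow_div_factorial_le {x : ℝ} (hx : 0 ≤ x) (m : ℕ) :
    ∑ k ∈ Ico 2 m, x ^ k / k ! ≤ Real.exp x - 1 - x := by
  have hsub : ∑ k ∈ Ico 2 m, x ^ k / k ! ≤ ∑ k ∈ Ico 2 (m + 2), x ^ k / k ! :=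
    sum_le_sum_of_subset_of_nonneg (Ico_subset_Ico_right (by omega)) fun _ _ _ => by positivity
  have hexp := Real.sum_le_exp_of_nonneg hx (m + 2)
  rw [← sum_range_add_sum_Ico _ (by omega : 2 ≤ m + 2)] at hexp
  norm_num [sum_range_succ] at hexp
  linarith

theorem halfExpTail_mul_geomTail_term {β : ℝ} (hβ : β ≠ 0) {n k : ℕ} (hk : k ≤ n) :
    1 / ((k ! : ℝ) * 2 ^ k) * (1 / (2 * β) ^ (n - k)) = β ^ k / k ! / (2 * β) ^ n := by
  have hpow : (2 * β) ^ n = 2 ^ k * β ^ k * (2 * β) ^ (n - k) := by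
    rw [← mul_pow, ← pow_add, Nat.add_sub_cancel' hk]
  rw [hpow]
  field_simp

theorem coeff_halfExpTail_mul_geomTail {β : ℝ} (hβ : β ≠ 0) (n : ℕ) :
    coeff n (halfExpTail * geomTail β) = (∑ k ∈ Ico 2 (n - 2), β ^ k / k !) / (2 * β) ^ n := by
  rw [coeff_mul, Nat.sum_antidiagonal_eq_sum_range_succ_mk, sum_div]
  simp only [halfExpTail, geomTail, coeff_mk]
  have hsub : Ico 2 (n - 2) ⊆ range (n + 1) := fun k hk => by
    simp only [mem_Ico, mem_range] at hk ⊢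
    omega
  rw [← sum_subset hsub]
  · refine sum_congr rfl fun k hk => ?_
    rw [mem_Ico] at hk
    rw [if_pos hk.1, if_pos (by omega), halfExpTail_mul_geomTail_term hβ (by omega)]
  · intro k _ hk
    rw [mem_Ico, not_and_or, not_le, not_lt] at hk
    rcases hk with hk | hk
    · rw [if_neg (by omega), zero_mul]
    · rw [if_neg (show ¬ 3 ≤ n - k by omega), mul_zero]

theorem stmt_14 (β : ℝ) (hβ : 1 ≤ β) :
    let A : PowerSeries ℝ :=
      PowerSeries.mk fun n => if 2 ≤ n then 1 / ((n.factorial : ℝ) * 2^n) else 0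
    let B : PowerSeries ℝ :=
      PowerSeries.mk fun n => if 3 ≤ n then 1 / (2*β)^n else 0
    ∀ n, PowerSeries.coeff n (A * B)
      ≤ if 5 ≤ n then (Real.exp β - 1 - β) * (1 / (2*β)^n) else 0 := by
  intro A B n
  have hβ0 : 0 < β := by linarith
  change coeff n (halfExpTail * geomTail β) ≤ _
  rw [coeff_halfExpTail_mul_geomTail hβ0.ne']
  split_ifs with hn
  · rw [← div_eq_mul_one_div]
    gcongr
    exact Real.sum_Ico_two_pow_div_factorial_le hβ0.le _
  · rw [Ico_eq_empty (by omega), sum_empty, zero_div]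
end

section
/- Formal power series inequality: (Σ_{n≥3} xⁿ/(4β)ⁿ) · (Σ_{n≥3} xⁿ/(2β)ⁿ) ⪯ (1/4) · Σ_{n≥6} xⁿ/(2β)ⁿ, coefficientwise, for any β > 0. -/
/-!
Rescaling `X` by `1 / (2β)` turns `A` into `∑_{k ≥ 3} 2⁻ᵏ Xᵏ` and `B` into `∑_{k ≥ 3} Xᵏ`. The
`n`-th coefficient of their product is `∑_{3 ≤ k ≤ n - 3} 2⁻ᵏ`, which vanishes for `n < 6` and is
bounded by the geometric tail `2⁻³ / (1 - 2⁻¹) = 1 / 4`.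
-/

open PowerSeries

lemma coeff_geomTail_mul_tail_le {x : ℝ} (hx₀ : 0 ≤ x) (hx₁ : x < 1) (m n : ℕ) :
    coeff n (mk (fun k => if m ≤ k then x ^ k else 0) * mk (fun k => if m ≤ k then 1 else 0))
      ≤ if 2 * m ≤ n then x ^ m / (1 - x) else 0 := by
  rw [coeff_mul, Finset.Nat.sum_antidiagonal_eq_sum_range_succ_mk]
  simp only [coeff_mk, mul_ite, mul_one, mul_zero]
  split_ifs with hn
  · calc ∑ k ∈ Finset.range (n + 1), (if m ≤ n - k then (if m ≤ k then x ^ k else 0) else 0)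
        ≤ ∑ k ∈ Finset.range (n + 1), (if m ≤ k then x ^ k else 0) := by
          gcongr with k
          split_ifs <;> first | rfl | positivity
      _ = ∑ k ∈ Finset.Ico m (n + 1), x ^ k := by
          rw [← Finset.sum_filter]
          congr 1
          ext k
          simp only [Finset.mem_filter, Finset.mem_range, Finset.mem_Ico]
          omega
      _ ≤ x ^ m / (1 - x) := geom_sum_Ico_le_of_lt_one hx₀ hx₁
  · refine (Finset.sum_eq_zero fun k hk => ?_).le
    split_ifs <;> first | rfl | omega

theorem stmt_15 (β : ℝ) (hβ : 0 < β) :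
    let A : PowerSeries ℝ :=
      PowerSeries.mk fun n => if 3 ≤ n then 1 / (4*β)^n else 0
    let B : PowerSeries ℝ :=
      PowerSeries.mk fun n => if 3 ≤ n then 1 / (2*β)^n else 0
    ∀ n, PowerSeries.coeff n (A * B)
      ≤ if 6 ≤ n then (1/4) * (1 / (2*β)^n) else 0 := by
  intro A B n
  set c : ℝ := 1 / (2 * β)
  have hA : A = rescale c (mk fun k => if 3 ≤ k then (1 / 2 : ℝ) ^ k else 0) := by
    ext k
    simp only [A, c, coeff_rescale, coeff_mk, mul_ite, mul_zero, ← mul_pow]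
    rw [← one_div_pow]
    congr 1
    ring
  have hB : B = rescale c (mk fun k => if 3 ≤ k then (1 : ℝ) else 0) := by
    ext k
    simp only [B, c, coeff_rescale, coeff_mk, mul_ite, mul_zero, mul_one, one_div_pow]
  rw [hA, hB, ← map_mul, coeff_rescale]
  calc c ^ n * coeff n _
      ≤ c ^ n * (if 2 * 3 ≤ n then (1 / 2) ^ 3 / (1 - 1 / 2) else 0) :=
        mul_le_mul_of_nonneg_left (coeff_geomTail_mul_tail_le (by norm_num) (by norm_num) 3 n)
          (by positivity)
    _ = _ := by
      split_ifs
      · rw [one_div_pow]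
        norm_num
        ring
      · simp
end
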